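/- Suppose asset j is dominant and let K ∈ 𝒦 with K_j ∈ (0,1). Then for every n ≥ 1 the optimality gap admits the exact decomposition g_1* − g_n(K) = (1/n)·log(1/K_j) − (1/n)·E[ log( 1 + Σ_{i ≠ j} (K_i·R_{n,i}) / (K_j·R_{n,j}) ) ], where g_1* = E[log(1 + X_j(0))]. -/

import Mathlib

open MeasureTheory ProbabilityTheory Filter Topology Finset Real

/-- Compound (total) return of asset `i` over the first `n` periods:
`R_{n,i}(ω) = ∏_{k=0}^{n-1} (1 + X_i(k)(ω))`. -/
noncomputable def compoundReturn {Ω : Type*} {m : ℕ} (X : ℕ → Ω → Fin m → ℝ)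
    (n : ℕ) (ω : Ω) (i : Fin m) : ℝ :=
  ∏ k ∈ Finset.range n, (1 + X k ω i)

/-- Expected logarithmic growth with rebalancing period `n`:
`g_n(K) = (1/n) E[log (Kᵀ R_n)]`. -/
noncomputable def elg {Ω : Type*} [MeasureSpace Ω] {m : ℕ} (X : ℕ → Ω → Fin m → ℝ)
    (n : ℕ) (K : Fin m → ℝ) : ℝ :=
  (n : ℝ)⁻¹ * ∫ ω, Real.log (∑ i, K i * compoundReturn X n ω i)

/-- The admissible set: the unit simplex in `ℝ^m`. -/
def simplex (m : ℕ) : Set (Fin m → ℝ) := {K | (∀ i, 0 ≤ K i) ∧ ∑ i, K i = 1}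

/-
Factoring out the `j`-th term, `Kᵀ R_n = K_j R_{n,j} (1 + Σ_{i≠j} K_i R_{n,i} / (K_j R_{n,j}))`, so
`log (Kᵀ R_n) = log K_j + Σ_{k<n} log (1 + X_j(k)) + log (1 + Σ_{i≠j} …)`. Taking expectations, the
middle term contributes `n · E[log (1 + X_j(0))] = n g_1*` because the periods are identically
distributed; dividing by `n` gives the decomposition. The bounds on the returns make every
logarithm bounded, hence integrable.
-/

theorem Real.log_sum_eq_log_add_log_one_add_sum_erase_div {ι : Type*} [Fintype ι]
    [DecidableEq ι] (a : ι → ℝ) {j : ι} (hj : a j ≠ 0) (hsum : ∑ i, a i ≠ 0) :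
    Real.log (∑ i, a i) = Real.log (a j) + Real.log (1 + ∑ i ∈ univ.erase j, a i / a j) := by
  have hfactor : ∑ i, a i = a j * (1 + ∑ i ∈ univ.erase j, a i / a j) := by
    rw [← add_sum_erase _ _ (mem_univ j), mul_add, mul_one, mul_sum]
    congr 1
    exact sum_congr rfl fun i _ => (mul_div_cancel₀ _ hj).symm
  rw [hfactor, Real.log_mul hj]
  rintro hzero
  exact hsum (by rw [hfactor, hzero, mul_zero])

theorem MeasureTheory.Integrable.log_of_ae_mem_Icc {α : Type*} [MeasurableSpace α]
    {μ : Measure α} [IsFiniteMeasure μ] {f : α → ℝ} {a b : ℝ} (hf : AEMeasurable f μ)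
    (ha : 0 < a) (hfab : ∀ᵐ x ∂μ, f x ∈ Set.Icc a b) :
    Integrable (fun x => Real.log (f x)) μ := by
  refine .of_bound (Real.measurable_log.comp_aemeasurable hf).aestronglyMeasurable
    (max |Real.log a| |Real.log b|) ?_
  filter_upwards [hfab] with x ⟨hax, hxb⟩
  exact abs_le_max_abs_abs (Real.log_le_log ha hax) (Real.log_le_log (ha.trans_le hax) hxb)

section CompoundReturn

variable {Ω : Type*} {m : ℕ} {X : ℕ → Ω → Fin m → ℝ}

theorem compoundReturn_mem_Icc {Xmin Xmax : ℝ} {ω : Ω} {i : Fin m} (hmin : -1 < Xmin)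
    (hX : ∀ k, X k ω i ∈ Set.Icc Xmin Xmax) (n : ℕ) :
    compoundReturn X n ω i ∈ Set.Icc ((1 + Xmin) ^ n) ((1 + Xmax) ^ n) := by
  have hconst (c : ℝ) : c ^ n = ∏ _k ∈ range n, c := by rw [prod_const, card_range]
  rw [hconst, hconst]
  constructor
  · exact prod_le_prod (fun _ _ => by linarith) fun k _ => by linarith [(hX k).1]
  · exact prod_le_prod (fun k _ => by linarith [(hX k).1]) fun k _ => by linarith [(hX k).2]

theorem sum_mul_compoundReturn_mem_Icc {K Xmin Xmax : Fin m → ℝ} {ω : Ω}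
    (hK : ∀ i, 0 ≤ K i) (hmin : ∀ i, -1 < Xmin i)
    (hX : ∀ k i, X k ω i ∈ Set.Icc (Xmin i) (Xmax i)) (n : ℕ) (j : Fin m) :
    ∑ i, K i * compoundReturn X n ω i ∈
      Set.Icc (K j * (1 + Xmin j) ^ n) (∑ i, K i * (1 + Xmax i) ^ n) := by
  have hR i := compoundReturn_mem_Icc (hmin i) (hX · i) n
  have hRpos i : 0 ≤ compoundReturn X n ω i :=
    (pow_nonneg (by linarith [hmin i]) n).trans (hR i).1
  constructor
  · calc K j * (1 + Xmin j) ^ n ≤ K j * compoundReturn X n ω j :=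
          mul_le_mul_of_nonneg_left (hR j).1 (hK j)
      _ ≤ ∑ i, K i * compoundReturn X n ω i :=
          single_le_sum (fun i _ => mul_nonneg (hK i) (hRpos i)) (mem_univ j)
  · exact sum_le_sum fun i _ => mul_le_mul_of_nonneg_left (hR i).2 (hK i)

theorem log_compoundReturn {ω : Ω} {i : Fin m} (hX : ∀ k, 1 + X k ω i ≠ 0) (n : ℕ) :
    Real.log (compoundReturn X n ω i) = ∑ k ∈ range n, Real.log (1 + X k ω i) :=
  Real.log_prod fun k _ => hX k

theorem measurable_compoundReturn [MeasurableSpace Ω] (hX : ∀ k, Measurable (X k)) (n : ℕ)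
    (i : Fin m) :
    Measurable fun ω => compoundReturn X n ω i :=
  Finset.measurable_prod _ fun k _ => measurable_const.add ((measurable_pi_apply i).comp (hX k))

variable [MeasureSpace Ω]

theorem integral_log_compoundReturn (hident : ∀ k, IdentDistrib (X k) (X 0) ℙ ℙ)
    {i : Fin m} (hX : ∀ k, ∀ᵐ ω ∂(ℙ : Measure Ω), 1 + X k ω i ≠ 0)
    (hint : Integrable (fun ω => Real.log (1 + X 0 ω i)) ℙ) (n : ℕ) :
    ∫ ω, Real.log (compoundReturn X n ω i) = n * ∫ ω, Real.log (1 + X 0 ω i) := by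
  have hlog : Measurable fun v : Fin m → ℝ => Real.log (1 + v i) :=
    (measurable_const.add (measurable_pi_apply i)).log
  have hident_log k : IdentDistrib (fun ω => Real.log (1 + X k ω i))
      (fun ω => Real.log (1 + X 0 ω i)) ℙ ℙ := (hident k).comp hlog
  calc ∫ ω, Real.log (compoundReturn X n ω i)
      = ∫ ω, ∑ k ∈ range n, Real.log (1 + X k ω i) :=
        integral_congr_ae <| (ae_all_iff.2 hX).mono fun ω hω => log_compoundReturn hω n
    _ = ∑ k ∈ range n, ∫ ω, Real.log (1 + X k ω i) :=
        integral_finsetSum _ fun k _ => (hident_log k).integrable_iff.2 hint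
    _ = n * ∫ ω, Real.log (1 + X 0 ω i) := by
        rw [sum_congr rfl fun k _ => (hident_log k).integral_eq, sum_const, card_range,
          nsmul_eq_mul]

end CompoundReturn

theorem gap_exact_decomposition_general
    {Ω : Type*} [MeasureSpace Ω] [IsProbabilityMeasure (ℙ : Measure Ω)]
    {m : ℕ}
    (X : ℕ → Ω → Fin m → ℝ)
    (hmeas : ∀ k, Measurable (X k))
    (hident : ∀ k, IdentDistrib (X k) (X 0) ℙ ℙ)
    (Xmin Xmax : Fin m → ℝ)
    (hXmin : ∀ i, -1 < Xmin i)
    (hbdd : ∀ k, ∀ᵐ ω ∂(ℙ : Measure Ω), ∀ i, Xmin i ≤ X k ω i ∧ X k ω i ≤ Xmax i)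
    (j : Fin m)
    (K : Fin m → ℝ) (hK : K ∈ simplex m) (hKj : K j ∈ Set.Ioo (0 : ℝ) 1) :
    ∀ n : ℕ, 1 ≤ n →
      (∫ ω, Real.log (1 + X 0 ω j)) - elg X n K =
        (n : ℝ)⁻¹ * Real.log (1 / K j) -
          (n : ℝ)⁻¹ * ∫ ω, Real.log (1 + ∑ i ∈ Finset.univ.erase j,
            (K i * compoundReturn X n ω i) / (K j * compoundReturn X n ω j)) := by
  intro n hn
  have hpos i : 0 < 1 + Xmin i := by linarith [hXmin i]
  have hX : ∀ᵐ ω ∂(ℙ : Measure Ω), ∀ k i, X k ω i ∈ Set.Icc (Xmin i) (Xmax i) :=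
    ae_all_iff.2 hbdd
  have hW := hX.mono fun ω hω => sum_mul_compoundReturn_mem_Icc hK.1 hXmin hω n j
  have hRj := hX.mono fun ω hω => compoundReturn_mem_Icc (hXmin j) (hω · j) n
  have hsplit : (fun ω => Real.log (1 + ∑ i ∈ univ.erase j,
        (K i * compoundReturn X n ω i) / (K j * compoundReturn X n ω j))) =ᵐ[ℙ]
      fun ω => Real.log (∑ i, K i * compoundReturn X n ω i) - Real.log (K j)
        - Real.log (compoundReturn X n ω j) := by
    filter_upwards [hW, hRj] with ω hWω hRω
    have hRω_pos := (pow_pos (hpos j) n).trans_le hRω.1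
    rw [Real.log_sum_eq_log_add_log_one_add_sum_erase_div (fun i => K i * compoundReturn X n ω i)
      (mul_pos hKj.1 hRω_pos).ne' ((mul_pos hKj.1 (pow_pos (hpos j) n)).trans_le hWω.1).ne',
      Real.log_mul hKj.1.ne' hRω_pos.ne']
    ring
  have hintW : Integrable (fun ω => Real.log (∑ i, K i * compoundReturn X n ω i)) ℙ :=
    .log_of_ae_mem_Icc (Finset.measurable_sum _ fun i _ =>
      measurable_const.mul (measurable_compoundReturn hmeas n i)).aemeasurable
      (mul_pos hKj.1 (pow_pos (hpos j) n)) hW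
  have hintR : Integrable (fun ω => Real.log (compoundReturn X n ω j)) ℙ :=
    .log_of_ae_mem_Icc (measurable_compoundReturn hmeas n j).aemeasurable (pow_pos (hpos j) n) hRj
  have hint1 : Integrable (fun ω => Real.log (1 + X 0 ω j)) ℙ :=
    .log_of_ae_mem_Icc (b := 1 + Xmax j)
      (measurable_const.add ((measurable_pi_apply j).comp (hmeas 0))).aemeasurable
      (hpos j) (hX.mono fun ω hω => ⟨by linarith [(hω 0 j).1], by linarith [(hω 0 j).2]⟩)
  have hRj_int := integral_log_compoundReturn hident
    (fun k => hX.mono fun ω hω => ((hpos j).trans_le (by linarith [(hω k j).1])).ne') hint1 n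
  rw [integral_congr_ae hsplit, integral_sub ?_ hintR, integral_sub hintW (integrable_const _),
    integral_const, hRj_int, elg]
  · simp only [one_div, log_inv, mul_neg, probReal_univ, smul_eq_mul, one_mul]
    field_simp
    ring
  · exact hintW.sub (integrable_const _)

/-- **Exact decomposition of the optimality gap.** If asset `j` is dominant and `K ∈ 𝒦` with
`K_j ∈ (0,1)`, then for every `n ≥ 1`,
`g_1^* - g_n(K) = (1/n) log(1/K_j) - (1/n) E[log (1 + Σ_{i≠j} K_i R_{n,i} / (K_j R_{n,j}))]`. -/
theorem gap_exact_decomposition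
    {Ω : Type*} [MeasureSpace Ω] [IsProbabilityMeasure (ℙ : Measure Ω)]
    {m : ℕ} (hm : 2 ≤ m)
    (X : ℕ → Ω → Fin m → ℝ)
    (hmeas : ∀ k, Measurable (X k))
    (hiid : iIndepFun X ℙ)
    (hident : ∀ k, IdentDistrib (X k) (X 0) ℙ ℙ)
    (Xmin Xmax : Fin m → ℝ)
    (hXmin : ∀ i, -1 < Xmin i)
    (hbdd : ∀ k, ∀ᵐ ω ∂(ℙ : Measure Ω), ∀ i, Xmin i ≤ X k ω i ∧ X k ω i ≤ Xmax i)
    (j : Fin m)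
    (hdom : ∀ i, i ≠ j → ∫ ω, (1 + X 0 ω i) / (1 + X 0 ω j) ≤ 1)
    (K : Fin m → ℝ) (hK : K ∈ simplex m) (hKj : K j ∈ Set.Ioo (0 : ℝ) 1) :
    ∀ n : ℕ, 1 ≤ n →
      (∫ ω, Real.log (1 + X 0 ω j)) - elg X n K =
        (n : ℝ)⁻¹ * Real.log (1 / K j) -
          (n : ℝ)⁻¹ * ∫ ω, Real.log (1 + ∑ i ∈ Finset.univ.erase j,
            (K i * compoundReturn X n ω i) / (K j * compoundReturn X n ω j)) :=
  gap_exact_decomposition_general X hmeas hident Xmin Xmax hXmin hbdd j K hK hKj
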